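/- Let k be a field and A ∈ ASM(n). The ASM ideal is generated by its essential minors: I_A = ⟨ all minors of size r_A(i,j)+1 of Z_{[i],[j]} : (i,j) ∈ Ess(A) ⟩; equivalently, I_A = ∑_{u ∈ biGr(A)} I_u, where biGr(A) = {[i, j, r_A(i,j)]_b : (i,j) ∈ Ess(A)}. -/

import Mathlib

/-- The entry of an `n × n` integer matrix in 1-based coordinates;
`0` outside the grid `[1,n] × [1,n]`. -/
def entry1 {n : ℕ} (A : Matrix (Fin n) (Fin n) ℤ) (i j : ℕ) : ℤ :=
  if h : 1 ≤ i ∧ i ≤ n ∧ 1 ≤ j ∧ j ≤ n then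
    A ⟨i - 1, by omega⟩ ⟨j - 1, by omega⟩ else 0

/-- The corner sum `r_A(i,j) = ∑_{k ≤ i} ∑_{l ≤ j} a_{k l}` (1-based). -/
def cornerSum {n : ℕ} (A : Matrix (Fin n) (Fin n) ℤ) (i j : ℕ) : ℤ :=
  ∑ k ∈ Finset.Icc 1 i, ∑ l ∈ Finset.Icc 1 j, entry1 A k l

/-- Partial row sum `∑_{l=1}^{j} a_{i l}`. -/
def rowPartial {n : ℕ} (A : Matrix (Fin n) (Fin n) ℤ) (i j : ℕ) : ℤ :=
  ∑ l ∈ Finset.Icc 1 j, entry1 A i l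

/-- Partial column sum `∑_{k=1}^{i} a_{k j}`. -/
def colPartial {n : ℕ} (A : Matrix (Fin n) (Fin n) ℤ) (i j : ℕ) : ℤ :=
  ∑ k ∈ Finset.Icc 1 i, entry1 A k j

/-- `A` is an alternating sign matrix: every partial row and column sum is `0`
or `1`, and every full row and column sums to `1`. -/
def IsASM {n : ℕ} (A : Matrix (Fin n) (Fin n) ℤ) : Prop :=
  (∀ i j : ℕ, rowPartial A i j = 0 ∨ rowPartial A i j = 1) ∧
  (∀ i j : ℕ, colPartial A i j = 0 ∨ colPartial A i j = 1) ∧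
  (∀ i : ℕ, 1 ≤ i → i ≤ n → rowPartial A i n = 1) ∧
  (∀ j : ℕ, 1 ≤ j → j ≤ n → colPartial A n j = 1)

/-- `A` is a partial alternating sign matrix: every partial row and column sum
is `0` or `1`. -/
def IsPartialASM {n : ℕ} (A : Matrix (Fin n) (Fin n) ℤ) : Prop :=
  (∀ i j : ℕ, rowPartial A i j = 0 ∨ rowPartial A i j = 1) ∧
  (∀ i j : ℕ, colPartial A i j = 0 ∨ colPartial A i j = 1)

/-- `(i,j)` (1-based) is in the Rothe diagram `D(A)`:
`∑_{k > i, l > j} a_{i l} a_{k j} = 1`. -/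
def InDiagram {n : ℕ} (A : Matrix (Fin n) (Fin n) ℤ) (i j : ℕ) : Prop :=
  (∑ k ∈ Finset.Icc 1 n, ∑ l ∈ Finset.Icc 1 n,
    (if i < k ∧ j < l then entry1 A i l * entry1 A k j else 0)) = 1

/-- `(i,j)` is in the essential set `Ess(A)`. -/
def InEss {n : ℕ} (A : Matrix (Fin n) (Fin n) ℤ) (i j : ℕ) : Prop :=
  InDiagram A i j ∧ ¬ InDiagram A (i + 1) j ∧ ¬ InDiagram A i (j + 1)

/-- The permutation matrix of `w` (a `1` in positions `(a, w a)`). -/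
def permMatrix {n : ℕ} (w : Equiv.Perm (Fin n)) : Matrix (Fin n) (Fin n) ℤ :=
  Matrix.of fun a b => if w a = b then 1 else 0

/-- The value `w(a)` of the permutation `w` in 1-based coordinates, extended by
the identity outside `[1,n]`. -/
def pval {n : ℕ} (w : Equiv.Perm (Fin n)) (a : ℕ) : ℕ :=
  if h : 1 ≤ a ∧ a ≤ n then ((w ⟨a - 1, by omega⟩ : Fin n) : ℕ) + 1 else a

/-- The value function (1-based) of the biGrassmannian permutation `[i,j,r]_b`. -/
def biGrFun (i j r a : ℕ) : ℕ :=
  if a ≤ r then a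
  else if a ≤ i then a + (j - r)
  else if a ≤ i + j - r then a - (i - r)
  else a

/-- The permutation matrix of the biGrassmannian permutation `[i,j,r]_b ∈ S_n`. -/
def biGrMatrix (n i j r : ℕ) : Matrix (Fin n) (Fin n) ℤ :=
  Matrix.of fun a b => if biGrFun i j r ((a : ℕ) + 1) = (b : ℕ) + 1 then 1 else 0

/-- `u ∈ S_n` is the biGrassmannian permutation `[i,j,r]_b`, i.e. its values
are given by the defining formula. -/
def IsBiGrPerm (n i j r : ℕ) (u : Equiv.Perm (Fin n)) : Prop :=
  ∀ a : ℕ, 1 ≤ a → a ≤ n → pval u a = biGrFun i j r a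

/-- `(a,b)` (1-based) is in the Rothe diagram of the permutation `w`:
`w(a) > b` and `w⁻¹(b) > a`. -/
def InPermDiagram {n : ℕ} (w : Equiv.Perm (Fin n)) (a b : ℕ) : Prop :=
  1 ≤ a ∧ a ≤ n ∧ 1 ≤ b ∧ b ≤ n ∧ b < pval w a ∧ a < pval w⁻¹ b

/-- `(a,b)` is in the essential set of the permutation `w`. -/
def InPermEss {n : ℕ} (w : Equiv.Perm (Fin n)) (a b : ℕ) : Prop :=
  InPermDiagram w a b ∧ ¬ InPermDiagram w (a + 1) b ∧ ¬ InPermDiagram w a (b + 1)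

/-- `w` has a descent at (1-based) position `d`: `w(d) > w(d+1)`. -/
def HasDescentAt {n : ℕ} (w : Equiv.Perm (Fin n)) (d : ℕ) : Prop :=
  1 ≤ d ∧ d < n ∧ pval w (d + 1) < pval w d

/-- `u` is biGrassmannian: both `u` and `u⁻¹` have a unique descent. -/
def IsBiGrassmannian {n : ℕ} (u : Equiv.Perm (Fin n)) : Prop :=
  (∃! d : ℕ, HasDescentAt u d) ∧ (∃! d : ℕ, HasDescentAt u⁻¹ d)

/-- The set of all minors of size `m` of `Z_{[i],[j]}`, where `Z = (z_{ab})`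
is the generic `n × n` matrix: determinants of `m × m` submatrices of `Z`
whose rows are chosen (strictly increasingly) among the first `i` rows and
whose columns among the first `j` columns. -/
def minorsOf (K : Type*) [CommRing K] (n i j m : ℕ) :
    Set (MvPolynomial (Fin n × Fin n) K) :=
  {p | ∃ f g : Fin m → Fin n, StrictMono f ∧ StrictMono g ∧
        (∀ a : Fin m, (f a : ℕ) < i) ∧ (∀ a : Fin m, (g a : ℕ) < j) ∧
        p = (Matrix.of fun a b : Fin m => MvPolynomial.X (f a, g b)).det}

/-- The ASM ideal `I_A`: the ideal of `K[z_{11}, ..., z_{nn}]` generated by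
all minors of size `r_A(i,j) + 1` of `Z_{[i],[j]}`, for all `1 ≤ i,j ≤ n`. -/
noncomputable def asmIdeal (K : Type*) [CommRing K] {n : ℕ}
    (A : Matrix (Fin n) (Fin n) ℤ) : Ideal (MvPolynomial (Fin n × Fin n) K) :=
  Ideal.span {p | ∃ i j : ℕ, 1 ≤ i ∧ i ≤ n ∧ 1 ≤ j ∧ j ≤ n ∧
    p ∈ minorsOf K n i j ((cornerSum A i j).toNat + 1)}

/-!
Both descriptions rest on two moves between boxes `(i, j)` of the grid. If `(i, j) ∈ D(A)` is not
essential, then `(i + 1, j)` or `(i, j + 1)` is in `D(A)` with the same corner sum, so the minors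
at `(i, j)` are among those at the larger box; moving down and right inside `D(A)` ends at an
essential box. If `(i, j) ∉ D(A)`, then the partial sum of row `i` or of column `j` is `1`, so the
corner sum drops by one at `(i - 1, j)` or `(i, j - 1)`, and Laplace expansion along the last
row (column) writes each minor at `(i, j)` in terms of the smaller minors there; moving up and
left ends in `D(A)` or at the boundary, where there are no minors. For the second description,
apply the first to `[i, j, r]_b`: its diagram is the rectangle `(r, i] × (r, j]`, whose only
essential box is `(i, j)`, where its corner sum is `r`.
-/

open Finset

section CornerSums

variable {n : ℕ} (A : Matrix (Fin n) (Fin n) ℤ)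

lemma sum_Icc_one_filter_lt {M : Type*} [AddCommGroup M] (f : ℕ → M) {j m : ℕ} (h : j ≤ m) :
    ∑ l ∈ Icc 1 m with j < l, f l = ∑ l ∈ Icc 1 m, f l - ∑ l ∈ Icc 1 j, f l := by
  have hfilter : {l ∈ Icc 1 m | j < l} = Ioc j m := by ext; simp; omega
  have hIoc : ∀ m, Icc 1 m = Ioc 0 m := fun m => Icc_add_one_left_eq_Ioc 0 m
  rw [hfilter, hIoc, hIoc, eq_sub_iff_add_eq', sum_Ioc_consecutive f (Nat.zero_le j) h]

lemma bounds_of_entry1_ne_zero {i j : ℕ} (h : entry1 A i j ≠ 0) :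
    1 ≤ i ∧ i ≤ n ∧ 1 ≤ j ∧ j ≤ n := by
  by_contra hc
  exact h (dif_neg hc)

lemma cornerSum_eq_sum_rowPartial (i j : ℕ) :
    cornerSum A i j = ∑ k ∈ Icc 1 i, rowPartial A k j :=
  rfl

lemma cornerSum_eq_sum_colPartial (i j : ℕ) :
    cornerSum A i j = ∑ l ∈ Icc 1 j, colPartial A i l :=
  sum_comm

lemma cornerSum_zero_left (j : ℕ) : cornerSum A 0 j = 0 := by
  simp [cornerSum]

lemma cornerSum_zero_right (i : ℕ) : cornerSum A i 0 = 0 := by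
  simp [cornerSum]

lemma cornerSum_succ_row (i j : ℕ) :
    cornerSum A (i + 1) j = cornerSum A i j + rowPartial A (i + 1) j :=
  sum_Icc_succ_top (by omega) _

lemma cornerSum_succ_col (i j : ℕ) :
    cornerSum A i (j + 1) = cornerSum A i j + colPartial A i (j + 1) := by
  simp only [cornerSum_eq_sum_colPartial]
  exact sum_Icc_succ_top (by omega) _

lemma inDiagram_bounds {i j : ℕ} (h : InDiagram A i j) : 1 ≤ i ∧ i < n ∧ 1 ≤ j ∧ j < n := by
  obtain ⟨k, hk, hsum⟩ := exists_ne_zero_of_sum_ne_zero (h.symm ▸ one_ne_zero)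
  obtain ⟨l, hl, hterm⟩ := exists_ne_zero_of_sum_ne_zero hsum
  split_ifs at hterm with hkl
  · have := bounds_of_entry1_ne_zero A (left_ne_zero_of_mul hterm)
    have := bounds_of_entry1_ne_zero A (right_ne_zero_of_mul hterm)
    omega
  · exact absurd rfl hterm

lemma inDiagram_iff_mul_eq_one {i j : ℕ} (hi : i ≤ n) (hj : j ≤ n) :
    InDiagram A i j ↔
      (colPartial A n j - colPartial A i j) * (rowPartial A i n - rowPartial A i j) = 1 := by
  have hsplit : ∀ k l, (if i < k ∧ j < l then entry1 A i l * entry1 A k j else 0) =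
      (if i < k then entry1 A k j else 0) * (if j < l then entry1 A i l else 0) := by
    intro k l
    split_ifs <;> simp_all [mul_comm]
  simp only [InDiagram, hsplit, ← sum_mul_sum, ← sum_filter, rowPartial, colPartial,
    sum_Icc_one_filter_lt _ hi, sum_Icc_one_filter_lt _ hj]

lemma inDiagram_iff (hA : IsASM A) {i j : ℕ} (hi : 1 ≤ i) (hin : i ≤ n) (hj : 1 ≤ j)
    (hjn : j ≤ n) :
    InDiagram A i j ↔ rowPartial A i j = 0 ∧ colPartial A i j = 0 := by
  rw [inDiagram_iff_mul_eq_one A hin hjn, hA.2.2.1 i hi hin, hA.2.2.2 j hj hjn]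
  rcases hA.1 i j with h | h <;> rcases hA.2.1 i j with h' | h' <;> simp [h, h']

lemma cornerSum_nonneg (hA : IsASM A) (i j : ℕ) : 0 ≤ cornerSum A i j :=
  sum_nonneg fun k _ => (hA.1 k j).elim (fun h => h.ge)
    (fun h => (zero_le_one.trans_eq h.symm : 0 ≤ rowPartial A k j))

lemma cornerSum_add_row_le (hA : IsASM A) (i d j : ℕ) :
    cornerSum A (i + d) j ≤ cornerSum A i j + d := by
  induction d with
  | zero => simp
  | succ d ih =>
    rw [← add_assoc, cornerSum_succ_row]
    rcases hA.1 (i + d + 1) j with h | h <;> rw [h] <;> push_cast <;> linarith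

lemma cornerSum_add_col_le (hA : IsASM A) (i j d : ℕ) :
    cornerSum A i (j + d) ≤ cornerSum A i j + d := by
  induction d with
  | zero => simp
  | succ d ih =>
    rw [← add_assoc, cornerSum_succ_col]
    rcases hA.2.1 i (j + d + 1) with h | h <;> rw [h] <;> push_cast <;> linarith

lemma cornerSum_last_row (hA : IsASM A) {j : ℕ} (hj : j ≤ n) : cornerSum A n j = j := by
  rw [cornerSum_eq_sum_colPartial, sum_congr rfl fun l hl => hA.2.2.2 l (mem_Icc.1 hl).1
    ((mem_Icc.1 hl).2.trans hj)]
  simp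

lemma cornerSum_succ_row_of_inDiagram (hA : IsASM A) {i j : ℕ} (h : InDiagram A (i + 1) j) :
    cornerSum A (i + 1) j = cornerSum A i j := by
  have := inDiagram_bounds A h
  rw [cornerSum_succ_row, ((inDiagram_iff A hA (by omega) (by omega) (by omega)
    (by omega)).1 h).1, add_zero]

lemma cornerSum_succ_col_of_inDiagram (hA : IsASM A) {i j : ℕ} (h : InDiagram A i (j + 1)) :
    cornerSum A i (j + 1) = cornerSum A i j := by
  have := inDiagram_bounds A h
  rw [cornerSum_succ_col, ((inDiagram_iff A hA (by omega) (by omega) (by omega)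
    (by omega)).1 h).2, add_zero]

/-- These inequalities make `[i, j, r_A(i,j)]_b` a permutation of `[1, n]` with `(i, j)` in its
diagram. -/
lemma cornerSum_lt_of_inDiagram (hA : IsASM A) {i j : ℕ} (hD : InDiagram A i j) :
    cornerSum A i j < i ∧ cornerSum A i j < j ∧ (i + j : ℤ) ≤ n + cornerSum A i j := by
  obtain ⟨hi, hin, hj, hjn⟩ := inDiagram_bounds A hD
  obtain ⟨i, rfl⟩ := Nat.exists_eq_add_of_le' hi
  obtain ⟨j, rfl⟩ := Nat.exists_eq_add_of_le' hj
  obtain ⟨d, hd⟩ := Nat.exists_eq_add_of_le hin.le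
  have hrow := cornerSum_add_row_le A hA 0 i (j + 1)
  have hcol := cornerSum_add_col_le A hA (i + 1) 0 j
  have hlast := cornerSum_add_row_le A hA (i + 1) d (j + 1)
  rw [← hd, cornerSum_last_row A hA hjn.le] at hlast
  rw [zero_add, ← cornerSum_succ_row_of_inDiagram A hA hD, cornerSum_zero_left] at hrow
  rw [zero_add, ← cornerSum_succ_col_of_inDiagram A hA hD, cornerSum_zero_right] at hcol
  omega

end CornerSums

section Minors

variable {K : Type*} [CommRing K] {n : ℕ}

lemma minorsOf_mono {i i' j j' m : ℕ} (hi : i ≤ i') (hj : j ≤ j') :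
    minorsOf K n i j m ⊆ minorsOf K n i' j' m := by
  rintro p ⟨f, g, hf, hg, hfi, hgj, hp⟩
  exact ⟨f, g, hf, hg, fun a => (hfi a).trans_le hi, fun a => (hgj a).trans_le hj, hp⟩

lemma minorsOf_zero_rows (j m : ℕ) : minorsOf K n 0 j (m + 1) = ∅ :=
  Set.eq_empty_of_forall_notMem fun _ ⟨_, _, _, _, hf, _⟩ => Nat.not_lt_zero _ (hf 0)

lemma minorsOf_zero_cols (i m : ℕ) : minorsOf K n i 0 (m + 1) = ∅ :=
  Set.eq_empty_of_forall_notMem fun _ ⟨_, _, _, _, _, hg, _⟩ => Nat.not_lt_zero _ (hg 0)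

/-- Expand along the last chosen row: the remaining chosen rows all lie among the first `i`. -/
lemma minorsOf_succ_rows_subset_span (i j t : ℕ) :
    minorsOf K n (i + 1) j (t + 1) ⊆ Ideal.span (minorsOf K n i j t) := by
  rintro _ ⟨f, g, hf, hg, hfi, hgj, rfl⟩
  rw [Matrix.det_succ_row _ (Fin.last t)]
  refine Ideal.sum_mem _ fun c _ => Ideal.mul_mem_left _ _ (Ideal.subset_span ?_)
  refine ⟨f ∘ Fin.castSucc, g ∘ c.succAbove, hf.comp Fin.strictMono_castSucc,
    hg.comp (Fin.strictMono_succAbove c), fun a => ?_, fun a => hgj _, ?_⟩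
  · have hlt : (f a.castSucc : ℕ) < f (Fin.last t) := hf (Fin.castSucc_lt_last a)
    exact Nat.lt_of_lt_of_le hlt (Nat.le_of_lt_succ (hfi (Fin.last t)))
  · rw [Fin.succAbove_last]
    rfl

lemma minorsOf_succ_cols_subset_span (i j t : ℕ) :
    minorsOf K n i (j + 1) (t + 1) ⊆ Ideal.span (minorsOf K n i j t) := by
  rintro _ ⟨f, g, hf, hg, hfi, hgj, rfl⟩
  rw [Matrix.det_succ_column _ (Fin.last t)]
  refine Ideal.sum_mem _ fun c _ => Ideal.mul_mem_left _ _ (Ideal.subset_span ?_)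
  refine ⟨f ∘ c.succAbove, g ∘ Fin.castSucc, hf.comp (Fin.strictMono_succAbove c),
    hg.comp Fin.strictMono_castSucc, fun a => hfi _, fun a => ?_, ?_⟩
  · have hlt : (g a.castSucc : ℕ) < g (Fin.last t) := hg (Fin.castSucc_lt_last a)
    exact Nat.lt_of_lt_of_le hlt (Nat.le_of_lt_succ (hgj (Fin.last t)))
  · rw [Fin.succAbove_last]
    rfl

end Minors

section EssentialMinors

variable (K : Type*) [CommRing K] {n : ℕ} (A : Matrix (Fin n) (Fin n) ℤ)

def cornerMinors (i j : ℕ) : Set (MvPolynomial (Fin n × Fin n) K) :=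
  minorsOf K n i j ((cornerSum A i j).toNat + 1)

noncomputable def essIdeal : Ideal (MvPolynomial (Fin n × Fin n) K) :=
  Ideal.span {p | ∃ i j : ℕ, InEss A i j ∧ p ∈ cornerMinors K A i j}

variable {A}

lemma cornerMinors_subset_of_inDiagram_succ_row (hA : IsASM A) {i j : ℕ}
    (h : InDiagram A (i + 1) j) : cornerMinors K A i j ⊆ cornerMinors K A (i + 1) j := by
  rw [cornerMinors, cornerMinors, cornerSum_succ_row_of_inDiagram A hA h]
  exact minorsOf_mono i.le_succ le_rfl

lemma cornerMinors_subset_of_inDiagram_succ_col (hA : IsASM A) {i j : ℕ}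
    (h : InDiagram A i (j + 1)) : cornerMinors K A i j ⊆ cornerMinors K A i (j + 1) := by
  rw [cornerMinors, cornerMinors, cornerSum_succ_col_of_inDiagram A hA h]
  exact minorsOf_mono le_rfl j.le_succ

lemma cornerMinors_subset_span_of_rowPartial_eq_one (hA : IsASM A) {i j : ℕ}
    (h : rowPartial A (i + 1) j = 1) :
    cornerMinors K A (i + 1) j ⊆ Ideal.span (cornerMinors K A i j) := by
  have := cornerSum_nonneg A hA i j
  rw [cornerMinors, cornerMinors, cornerSum_succ_row, h,
    show (cornerSum A i j + 1).toNat + 1 = (cornerSum A i j).toNat + 1 + 1 by omega]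
  exact minorsOf_succ_rows_subset_span _ _ _

lemma cornerMinors_subset_span_of_colPartial_eq_one (hA : IsASM A) {i j : ℕ}
    (h : colPartial A i (j + 1) = 1) :
    cornerMinors K A i (j + 1) ⊆ Ideal.span (cornerMinors K A i j) := by
  have := cornerSum_nonneg A hA i j
  rw [cornerMinors, cornerMinors, cornerSum_succ_col, h,
    show (cornerSum A i j + 1).toNat + 1 = (cornerSum A i j).toNat + 1 + 1 by omega]
  exact minorsOf_succ_cols_subset_span _ _ _

theorem cornerMinors_subset_essIdeal_of_inDiagram (hA : IsASM A) {i j : ℕ}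
    (hD : InDiagram A i j) : cornerMinors K A i j ⊆ essIdeal K A := by
  by_cases hE : InEss A i j
  · exact fun p hp => Ideal.subset_span ⟨i, j, hE, hp⟩
  have hnext : InDiagram A (i + 1) j ∨ InDiagram A i (j + 1) := by
    simp only [InEss, not_and_or, not_not] at hE
    tauto
  rcases hnext with h | h
  · exact (cornerMinors_subset_of_inDiagram_succ_row K hA h).trans
      (cornerMinors_subset_essIdeal_of_inDiagram hA h)
  · exact (cornerMinors_subset_of_inDiagram_succ_col K hA h).trans
      (cornerMinors_subset_essIdeal_of_inDiagram hA h)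
termination_by 2 * n - (i + j)
decreasing_by
  all_goals have := inDiagram_bounds A h; omega

theorem cornerMinors_subset_essIdeal (hA : IsASM A) :
    ∀ {i j : ℕ}, i ≤ n → j ≤ n → cornerMinors K A i j ⊆ essIdeal K A
  | 0, j, _, _ => by simp [cornerMinors, minorsOf_zero_rows]
  | i + 1, 0, _, _ => by simp [cornerMinors, minorsOf_zero_cols]
  | i + 1, j + 1, hi, hj => by
    by_cases hD : InDiagram A (i + 1) (j + 1)
    · exact cornerMinors_subset_essIdeal_of_inDiagram K hA hD
    have hpartial : rowPartial A (i + 1) (j + 1) = 1 ∨ colPartial A (i + 1) (j + 1) = 1 := by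
      rw [inDiagram_iff A hA (by omega) hi (by omega) hj] at hD
      rcases hA.1 (i + 1) (j + 1) with h | h <;> rcases hA.2.1 (i + 1) (j + 1) with h' | h' <;>
        simp_all
    rcases hpartial with h | h
    · exact (cornerMinors_subset_span_of_rowPartial_eq_one K hA h).trans
        (Ideal.span_le.2 (cornerMinors_subset_essIdeal hA (by omega) hj))
    · exact (cornerMinors_subset_span_of_colPartial_eq_one K hA h).trans
        (Ideal.span_le.2 (cornerMinors_subset_essIdeal hA hi (by omega)))

variable (A)

theorem asmIdeal_eq_essIdeal (hA : IsASM A) : asmIdeal K A = essIdeal K A := by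
  refine le_antisymm (Ideal.span_le.2 ?_) (Ideal.span_mono ?_)
  · rintro p ⟨i, j, -, hi, -, hj, hp⟩
    exact cornerMinors_subset_essIdeal K hA hi hj hp
  · rintro p ⟨i, j, hE, hp⟩
    obtain ⟨hi, hin, hj, hjn⟩ := inDiagram_bounds A hE.1
    exact ⟨i, j, hi, hin.le, hj, hjn.le, hp⟩

end EssentialMinors

section FunctionMatrix

variable {n : ℕ} {w v : ℕ → ℕ}

/-- The `0/1` matrix with a `1` at `(a, w a)`, in the `1`-based indexing of `entry1`. -/
def funMatrix (n : ℕ) (w : ℕ → ℕ) : Matrix (Fin n) (Fin n) ℤ :=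
  Matrix.of fun a b => if w ((a : ℕ) + 1) = (b : ℕ) + 1 then 1 else 0

lemma entry1_funMatrix (k l : ℕ) :
    entry1 (funMatrix n w) k l =
      if w k = l ∧ (1 ≤ k ∧ k ≤ n ∧ 1 ≤ l ∧ l ≤ n) then 1 else 0 := by
  by_cases h : 1 ≤ k ∧ k ≤ n ∧ 1 ≤ l ∧ l ≤ n
  · simp [entry1, funMatrix, h, Nat.sub_add_cancel h.1, Nat.sub_add_cancel h.2.2.1]
  · simp [entry1, h]

lemma rowPartial_funMatrix (k l : ℕ) :
    rowPartial (funMatrix n w) k l =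
      if 1 ≤ k ∧ k ≤ n ∧ 1 ≤ w k ∧ w k ≤ l ∧ w k ≤ n then 1 else 0 := by
  simp only [rowPartial, entry1_funMatrix, ite_and, sum_ite_eq, mem_Icc]
  split_ifs <;> rfl

lemma entry1_funMatrix_swap (hwv : ∀ a b, w a = b ↔ v b = a) (k l : ℕ) :
    entry1 (funMatrix n w) k l = entry1 (funMatrix n v) l k := by
  simp only [entry1_funMatrix, hwv]
  split_ifs <;> tauto

lemma colPartial_funMatrix (hwv : ∀ a b, w a = b ↔ v b = a) (k l : ℕ) :
    colPartial (funMatrix n w) k l = rowPartial (funMatrix n v) l k := by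
  simp only [colPartial, rowPartial, entry1_funMatrix_swap hwv]

lemma isASM_funMatrix (hwv : ∀ a b, w a = b ↔ v b = a)
    (hw : ∀ a, 1 ≤ a → a ≤ n → 1 ≤ w a ∧ w a ≤ n) (hv : ∀ b, 1 ≤ b → b ≤ n → 1 ≤ v b ∧ v b ≤ n) :
    IsASM (funMatrix n w) := by
  refine ⟨fun k l => ?_, fun k l => ?_, fun k hk hkn => ?_, fun l hl hln => ?_⟩
  · rw [rowPartial_funMatrix]; split_ifs <;> simp
  · rw [colPartial_funMatrix hwv, rowPartial_funMatrix]; split_ifs <;> simp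
  · rw [rowPartial_funMatrix, if_pos]; have := hw k hk hkn; omega
  · rw [colPartial_funMatrix hwv, rowPartial_funMatrix, if_pos]; have := hv l hl hln; omega

lemma inDiagram_funMatrix_iff (hwv : ∀ a b, w a = b ↔ v b = a)
    (hw : ∀ a, 1 ≤ a → a ≤ n → 1 ≤ w a ∧ w a ≤ n) (hv : ∀ b, 1 ≤ b → b ≤ n → 1 ≤ v b ∧ v b ≤ n)
    (a b : ℕ) :
    InDiagram (funMatrix n w) a b ↔ 1 ≤ a ∧ a ≤ n ∧ 1 ≤ b ∧ b ≤ n ∧ b < w a ∧ a < v b := by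
  by_cases hab : 1 ≤ a ∧ a ≤ n ∧ 1 ≤ b ∧ b ≤ n
  · obtain ⟨ha, han, hb, hbn⟩ := hab
    rw [inDiagram_iff _ (isASM_funMatrix hwv hw hv) ha han hb hbn, rowPartial_funMatrix,
      colPartial_funMatrix hwv, rowPartial_funMatrix]
    have := hw a ha han
    have := hv b hb hbn
    split_ifs <;> simp <;> omega
  · exact iff_of_false (fun h => hab (by have := inDiagram_bounds _ h; omega)) (by tauto)

end FunctionMatrix

section BiGrassmannian

variable {n i j r : ℕ}

lemma biGrFun_eq_iff (hri : r ≤ i) (hrj : r ≤ j) (a b : ℕ) :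
    biGrFun i j r a = b ↔ biGrFun j i r b = a := by
  unfold biGrFun
  split_ifs <;> omega

lemma biGrFun_mem_Icc (hrj : r ≤ j) (hijr : i + j ≤ n + r) {a : ℕ} (ha : 1 ≤ a) (han : a ≤ n) :
    1 ≤ biGrFun i j r a ∧ biGrFun i j r a ≤ n := by
  unfold biGrFun
  split_ifs <;> omega

lemma biGrMatrix_eq_funMatrix : biGrMatrix n i j r = funMatrix n (biGrFun i j r) := rfl

lemma isASM_biGrMatrix (hri : r ≤ i) (hrj : r ≤ j) (hijr : i + j ≤ n + r) :
    IsASM (biGrMatrix n i j r) :=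
  isASM_funMatrix (biGrFun_eq_iff hri hrj) (fun _ => biGrFun_mem_Icc hrj hijr)
    (fun _ => biGrFun_mem_Icc hri (by omega))

lemma inDiagram_biGrMatrix_iff (hri : r ≤ i) (hrj : r ≤ j) (hijr : i + j ≤ n + r) (a b : ℕ) :
    InDiagram (biGrMatrix n i j r) a b ↔ r < a ∧ a ≤ i ∧ r < b ∧ b ≤ j := by
  rw [biGrMatrix_eq_funMatrix, inDiagram_funMatrix_iff (biGrFun_eq_iff hri hrj)
    (fun _ => biGrFun_mem_Icc hrj hijr) (fun _ => biGrFun_mem_Icc hri (by omega))]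
  unfold biGrFun
  split_ifs <;> omega

lemma inEss_biGrMatrix_iff (hri : r < i) (hrj : r < j) (hijr : i + j ≤ n + r) (a b : ℕ) :
    InEss (biGrMatrix n i j r) a b ↔ a = i ∧ b = j := by
  simp only [InEss, inDiagram_biGrMatrix_iff hri.le hrj.le hijr]
  omega

lemma cornerSum_biGrMatrix (hri : r ≤ i) (hrj : r ≤ j) (hijr : i + j ≤ n + r) :
    cornerSum (biGrMatrix n i j r) i j = r := by
  have hrow : ∀ k ∈ Icc 1 i, rowPartial (biGrMatrix n i j r) k j = if k ≤ r then 1 else 0 := by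
    intro k hk
    rw [biGrMatrix_eq_funMatrix, rowPartial_funMatrix]
    have := mem_Icc.1 hk
    unfold biGrFun
    split_ifs <;> omega
  have hfilter : {k ∈ Icc 1 i | k ≤ r} = Icc 1 r := by ext; simp; omega
  rw [cornerSum_eq_sum_rowPartial, sum_congr rfl hrow, sum_boole, hfilter, Nat.card_Icc,
    Nat.add_sub_cancel]

theorem asmIdeal_biGrMatrix (K : Type*) [CommRing K] (hri : r < i) (hrj : r < j)
    (hijr : i + j ≤ n + r) :
    asmIdeal K (biGrMatrix n i j r) = Ideal.span (minorsOf K n i j (r + 1)) := by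
  have hminors : cornerMinors K (biGrMatrix n i j r) i j = minorsOf K n i j (r + 1) := by
    rw [cornerMinors, cornerSum_biGrMatrix hri.le hrj.le hijr, Int.toNat_natCast]
  rw [asmIdeal_eq_essIdeal K _ (isASM_biGrMatrix hri.le hrj.le hijr), ← hminors]
  refine le_antisymm (Ideal.span_le.2 ?_) (Ideal.span_le.2 fun p hp => Ideal.subset_span
    ⟨i, j, (inEss_biGrMatrix_iff hri hrj hijr i j).2 ⟨rfl, rfl⟩, hp⟩)
  rintro p ⟨a, b, hE, hp⟩
  obtain ⟨rfl, rfl⟩ := (inEss_biGrMatrix_iff hri hrj hijr a b).1 hE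
  exact Ideal.subset_span hp

theorem asmIdeal_biGrMatrix_of_inDiagram (K : Type*) [CommRing K]
    {A : Matrix (Fin n) (Fin n) ℤ} (hA : IsASM A) (hD : InDiagram A i j) :
    asmIdeal K (biGrMatrix n i j (cornerSum A i j).toNat) =
      Ideal.span (cornerMinors K A i j) := by
  obtain ⟨hri, hrj, hijr⟩ := cornerSum_lt_of_inDiagram A hA hD
  have := cornerSum_nonneg A hA i j
  exact asmIdeal_biGrMatrix K (by omega) (by omega) (by omega)

end BiGrassmannian

/-- For a field `K` and `A ∈ ASM(n)`, the ASM ideal is generated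
by its essential minors:
`I_A = ⟨ minors of size r_A(i,j)+1 of Z_{[i],[j]} : (i,j) ∈ Ess(A) ⟩`;
equivalently `I_A = ∑_{u ∈ biGr(A)} I_u`, where
`biGr(A) = {[i, j, r_A(i,j)]_b : (i,j) ∈ Ess(A)}`. -/
theorem stmt19 {K : Type*} [Field K] {n : ℕ}
    (A : Matrix (Fin n) (Fin n) ℤ) (hA : IsASM A) :
    asmIdeal K A =
      Ideal.span {p | ∃ i j : ℕ, InEss A i j ∧
        p ∈ minorsOf K n i j ((cornerSum A i j).toNat + 1)} ∧
    asmIdeal K A =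
      sSup {I : Ideal (MvPolynomial (Fin n × Fin n) K) | ∃ i j : ℕ,
        InEss A i j ∧
        I = asmIdeal K (biGrMatrix n i j (cornerSum A i j).toNat)} := by
  have hEss : asmIdeal K A = essIdeal K A := asmIdeal_eq_essIdeal K A hA
  refine ⟨hEss, hEss.trans (le_antisymm (Ideal.span_le.2 ?_) (sSup_le ?_))⟩
  · rintro p ⟨i, j, hE, hp⟩
    have hmem : p ∈ asmIdeal K (biGrMatrix n i j (cornerSum A i j).toNat) := by
      rw [asmIdeal_biGrMatrix_of_inDiagram K hA hE.1]
      exact Ideal.subset_span hp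
    exact Ideal.mem_sSup_of_mem (by exact ⟨i, j, hE, rfl⟩) hmem
  · rintro _ ⟨i, j, hE, rfl⟩
    rw [asmIdeal_biGrMatrix_of_inDiagram K hA hE.1]
    exact Ideal.span_mono fun p hp => ⟨i, j, hE, hp⟩
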